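/- arXiv:2105.06821 — 4 statements merged into one kernel-verified Lean document; each statement's English description precedes it below -/
import Mathlib

section
/- Let 0 < r₁ < r₂, let z₀ ∈ ℂ, and let f be holomorphic on an open set containing the closed disk D̄(z₀, r₂), with |f(z)| ≤ M₁ and |f'(z)| ≤ M₂ for all z on the boundary circle |z − z₀| = r₂. Let k be a nonnegative integer. Then for every z with |z − z₀| ≤ r₁, the Taylor remainder T_k(z) := f(z) − Σ_{n=0}^{k} (f^{(n)}(z₀)/n!)·(z − z₀)ⁿ satisfies both |T_k(z)| ≤ M₁·|z − z₀|^{k+1}/((1 − r₁/r₂)·r₂^{k+1}) and |T_k(z)| ≤ M₂·|z − z₀|^{k+1}/((k+1)·(1 − r₁/r₂)·r₂^{k}). -/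
/-!
The remainder is the tail of the Taylor series at `z₀`. Cauchy's estimates on the circle of
radius `r₂` bound the `n`-th Taylor coefficient by `M₁ / r₂ ^ n` (applied to `f`) and by
`M₂ / (n * r₂ ^ (n - 1))` (applied to `f'`), so beyond index `k` the series is dominated by a
geometric series of ratio `r₁ / r₂`.
-/

open Metric Finset Nat

theorem norm_sub_sum_range_le_of_norm_le_geometric {E : Type*} [NormedAddCommGroup E]
    {g : ℕ → E} {s : E} {m : ℕ} {C q : ℝ} (hg : HasSum g s) (hq₀ : 0 ≤ q) (hq₁ : q < 1)
    (hC : ∀ n, ‖g (n + m)‖ ≤ C * q ^ n) :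
    ‖s - ∑ i ∈ range m, g i‖ ≤ C / (1 - q) := by
  rw [div_eq_mul_inv]
  exact ((hasSum_nat_add_iff' m).mpr hg).norm_le_of_bounded
    ((hasSum_geometric_of_lt_one hq₀ hq₁).mul_left C) hC

theorem norm_sub_taylor_sum_le {f : ℂ → ℂ} {z₀ z : ℂ} {r ρ C : ℝ} {m : ℕ}
    (hf : DifferentiableOn ℂ f (ball z₀ r)) (hz : ‖z - z₀‖ ≤ ρ) (hρ : ρ < r)
    (hC : ∀ n, ‖iteratedDeriv (n + m) f z₀ / ((n + m)! : ℂ)‖ ≤ C / r ^ n) :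
    ‖f z - ∑ n ∈ range m, iteratedDeriv n f z₀ / (n ! : ℂ) * (z - z₀) ^ n‖
      ≤ C * ‖z - z₀‖ ^ m / (1 - ρ / r) := by
  have hρ₀ : 0 ≤ ρ := (norm_nonneg _).trans hz
  have hr : 0 < r := hρ₀.trans_lt hρ
  have hC₀ : 0 ≤ C := by simpa using (norm_nonneg _).trans (hC 0)
  have hsum : HasSum (fun n ↦ iteratedDeriv n f z₀ / (n ! : ℂ) * (z - z₀) ^ n) (f z) := by
    have h := Complex.hasSum_taylorSeries_on_ball hf (mem_ball_iff_norm.2 (hz.trans_lt hρ))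
    simpa only [smul_eq_mul, div_eq_inv_mul, mul_assoc, mul_comm, mul_left_comm] using h
  refine norm_sub_sum_range_le_of_norm_le_geometric hsum (by positivity)
    ((div_lt_one hr).2 hρ) fun n ↦ ?_
  calc ‖iteratedDeriv (n + m) f z₀ / ((n + m)! : ℂ) * (z - z₀) ^ (n + m)‖
      ≤ C / r ^ n * ‖z - z₀‖ ^ (n + m) := by
        rw [norm_mul, norm_pow]; gcongr; exact hC n
    _ = C * ‖z - z₀‖ ^ m * (‖z - z₀‖ / r) ^ n := by rw [div_pow, pow_add]; ring
    _ ≤ C * ‖z - z₀‖ ^ m * (ρ / r) ^ n := by gcongr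

section CauchyEstimate

variable {f : ℂ → ℂ} {c : ℂ} {R C : ℝ}

theorem norm_iteratedDeriv_add_div_factorial_le (hR : 0 < R) (hf : DiffContOnCl ℂ f (ball c R))
    (hC : ∀ z ∈ sphere c R, ‖f z‖ ≤ C) (m n : ℕ) :
    ‖iteratedDeriv (n + m) f c / ((n + m)! : ℂ)‖ ≤ C / R ^ m / R ^ n := by
  have h := Complex.norm_iteratedDeriv_le_of_forall_mem_sphere_norm_le (n + m) hR hf hC
  rw [norm_div, Complex.norm_natCast, div_le_iff₀ (by positivity)]
  calc _ ≤ _ := h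
    _ = _ := by rw [pow_add]; field_simp

theorem norm_iteratedDeriv_succ_add_div_factorial_le (hR : 0 < R)
    (hf : DiffContOnCl ℂ (deriv f) (ball c R)) (hC : ∀ z ∈ sphere c R, ‖deriv f z‖ ≤ C)
    (m n : ℕ) :
    ‖iteratedDeriv (n + (m + 1)) f c / ((n + (m + 1))! : ℂ)‖ ≤ C / ((m + 1) * R ^ m) / R ^ n := by
  have h := Complex.norm_iteratedDeriv_le_of_forall_mem_sphere_norm_le (n + m) hR hf hC
  rw [← iteratedDeriv_succ'] at h
  have hC₀ : 0 ≤ C := (norm_nonneg _).trans (hC (c + R) (by simp [hR.le]))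
  rw [← add_assoc, norm_div, Complex.norm_natCast, factorial_succ, cast_mul]
  calc _ ≤ (n + m)! * C / R ^ (n + m) / ((n + m + 1 : ℕ) * (n + m)!) := by gcongr
    _ = C / ((n + m + 1 : ℕ) * R ^ m) / R ^ n := by rw [pow_add]; field_simp
    _ ≤ C / ((m + 1) * R ^ m) / R ^ n := by gcongr; push_cast; linarith

end CauchyEstimate

theorem taylor_remainder_bounds_general
    (r₁ r₂ : ℝ) (hr₁₂ : r₁ < r₂)
    (z₀ : ℂ) (f : ℂ → ℂ)
    (U : Set ℂ) (hUopen : IsOpen U) (hUsub : Metric.closedBall z₀ r₂ ⊆ U)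
    (hf : DifferentiableOn ℂ f U)
    (M₁ M₂ : ℝ)
    (hM₁ : ∀ z ∈ Metric.sphere z₀ r₂, ‖f z‖ ≤ M₁)
    (hM₂ : ∀ z ∈ Metric.sphere z₀ r₂, ‖deriv f z‖ ≤ M₂)
    (k : ℕ) (z : ℂ) (hz : ‖z - z₀‖ ≤ r₁) :
    ‖f z - ∑ n ∈ Finset.range (k+1),
        iteratedDeriv n f z₀ / (n.factorial : ℂ) * (z - z₀)^n‖
      ≤ M₁ * ‖z - z₀‖^(k+1) / ((1 - r₁/r₂) * r₂^(k+1)) ∧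
    ‖f z - ∑ n ∈ Finset.range (k+1),
        iteratedDeriv n f z₀ / (n.factorial : ℂ) * (z - z₀)^n‖
      ≤ M₂ * ‖z - z₀‖^(k+1) / ((k+1) * (1 - r₁/r₂) * r₂^k) := by
  have hr₂ : 0 < r₂ := (norm_nonneg _).trans_lt (hz.trans_lt hr₁₂)
  have hball : DifferentiableOn ℂ f (ball z₀ r₂) := hf.mono (ball_subset_closedBall.trans hUsub)
  constructor
  · calc _ ≤ M₁ / r₂ ^ (k + 1) * ‖z - z₀‖ ^ (k + 1) / (1 - r₁ / r₂) :=
          norm_sub_taylor_sum_le hball hz hr₁₂ <|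
            norm_iteratedDeriv_add_div_factorial_le hr₂ (hf.diffContOnCl_ball hUsub) hM₁ (k + 1)
      _ = _ := by field_simp
  · calc _ ≤ M₂ / ((k + 1) * r₂ ^ k) * ‖z - z₀‖ ^ (k + 1) / (1 - r₁ / r₂) :=
          norm_sub_taylor_sum_le hball hz hr₁₂ <|
            norm_iteratedDeriv_succ_add_div_factorial_le hr₂
              ((hf.deriv hUopen).diffContOnCl_ball hUsub) hM₂ k
      _ = _ := by field_simp

/-- Taylor's formula for holomorphic functions with explicit remainder bounds. -/
theorem taylor_remainder_bounds
    (r₁ r₂ : ℝ) (hr₁ : 0 < r₁) (hr₁₂ : r₁ < r₂)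
    (z₀ : ℂ) (f : ℂ → ℂ)
    (U : Set ℂ) (hUopen : IsOpen U) (hUsub : Metric.closedBall z₀ r₂ ⊆ U)
    (hf : DifferentiableOn ℂ f U)
    (M₁ M₂ : ℝ)
    (hM₁ : ∀ z ∈ Metric.sphere z₀ r₂, ‖f z‖ ≤ M₁)
    (hM₂ : ∀ z ∈ Metric.sphere z₀ r₂, ‖deriv f z‖ ≤ M₂)
    (k : ℕ) (z : ℂ) (hz : ‖z - z₀‖ ≤ r₁) :
    ‖f z - ∑ n ∈ Finset.range (k+1),
        iteratedDeriv n f z₀ / (n.factorial : ℂ) * (z - z₀)^n‖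
      ≤ M₁ * ‖z - z₀‖^(k+1) / ((1 - r₁/r₂) * r₂^(k+1)) ∧
    ‖f z - ∑ n ∈ Finset.range (k+1),
        iteratedDeriv n f z₀ / (n.factorial : ℂ) * (z - z₀)^n‖
      ≤ M₂ * ‖z - z₀‖^(k+1) / ((k+1) * (1 - r₁/r₂) * r₂^k) :=
  taylor_remainder_bounds_general r₁ r₂ hr₁₂ z₀ f U hUopen hUsub hf M₁ M₂ hM₁ hM₂ k z hz
end

section
/- Let A be a nonnegative real number and let B and a be positive real numbers. Then ∫₀^∞ exp(−A·x − (a·B/4)·x²) dx ≤ (2/a + e^{−1/a})·√2/(A + √B). -/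
/-!
Write `f x = exp (-A x - c x²)` with `c = a B / 4`. Since `(A + 2 c x) f x` is the derivative of
`-f`, its integral over `(0, ∞)` is `1`. Replacing the slope `2 c x` by a constant `2 c T` costs
nothing beyond `T`, and on `[0, T]` at most `∫₀ᵀ (2 c T - 2 c x) dx = c T²` because `f ≤ 1`; hence
`(A + 2 c T) ∫ f ≤ 1 + c T²`. Taking `2 c T = √B` gives `c T² = 1 / a`, and
`1 + 1 / a ≤ 2 / a + exp (-1 / a)` since `exp (-1 / a) ≥ 1 - 1 / a`.
-/

open Real MeasureTheory Set Filter

section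
variable {A c T : ℝ}

theorem hasDerivAt_neg_exp_neg_mul_sub_mul_sq (A c x : ℝ) :
    HasDerivAt (fun x => -exp (-A * x - c * x ^ 2))
      ((A + 2 * c * x) * exp (-A * x - c * x ^ 2)) x := by
  have h : HasDerivAt (fun x => -A * x - c * x ^ 2) (-A - c * (2 * x)) x := by
    simpa using ((hasDerivAt_id' x).const_mul (-A)).fun_sub ((hasDerivAt_pow 2 x).const_mul c)
  exact h.exp.fun_neg.congr_deriv (by ring)

theorem tendsto_exp_neg_mul_sub_mul_sq_atTop (hc : 0 < c) :
    Tendsto (fun x => exp (-A * x - c * x ^ 2)) atTop (nhds 0) := by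
  refine tendsto_exp_atBot.comp ?_
  have : Tendsto (fun x : ℝ => x * (A + c * x)) atTop atTop :=
    tendsto_id.atTop_mul_atTop₀ (tendsto_atTop_add_const_left _ _ (tendsto_id.const_mul_atTop hc))
  exact (tendsto_neg_atTop_atBot.comp this).congr fun x => by simp only [Function.comp_apply]; ring

theorem integrableOn_Ioi_exp_neg_mul_sub_mul_sq (hA : 0 ≤ A) (hc : 0 < c) :
    IntegrableOn (fun x => exp (-A * x - c * x ^ 2)) (Ioi 0) := by
  refine (integrable_exp_neg_mul_sq hc).integrableOn.mono' (by fun_prop) ?_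
  filter_upwards [self_mem_ae_restrict measurableSet_Ioi] with x (hx : 0 < x)
  rw [norm_of_nonneg (exp_pos _).le, exp_le_exp]
  nlinarith [mul_nonneg hA hx.le]

theorem mul_intervalIntegral_exp_neg_mul_sub_mul_sq_le (hA : 0 ≤ A) (hc : 0 ≤ c) (hT : 0 ≤ T) :
    (A + 2 * c * T) * ∫ x in 0..T, exp (-A * x - c * x ^ 2) ≤
      1 - exp (-A * T - c * T ^ 2) + c * T ^ 2 := by
  have hderiv (x : ℝ) :
      HasDerivAt (fun x => -exp (-A * x - c * x ^ 2) + 2 * c * T * x - c * x ^ 2)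
        ((A + 2 * c * x) * exp (-A * x - c * x ^ 2) + (2 * c * T - 2 * c * x)) x := by
    have := ((hasDerivAt_neg_exp_neg_mul_sub_mul_sq A c x).add
      ((hasDerivAt_id' x).const_mul (2 * c * T))).sub ((hasDerivAt_pow 2 x).const_mul c)
    refine this.congr_deriv ?_
    simp only [mul_one, Nat.cast_ofNat, pow_one, Nat.add_one_sub_one]
    ring
  have hle : ∀ x ∈ Icc 0 T, (A + 2 * c * T) * exp (-A * x - c * x ^ 2) ≤
      (A + 2 * c * x) * exp (-A * x - c * x ^ 2) + (2 * c * T - 2 * c * x) := by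
    rintro x ⟨hx0, hxT⟩
    have hexp : exp (-A * x - c * x ^ 2) ≤ 1 := exp_le_one_iff.2 (by nlinarith [mul_nonneg hA hx0])
    nlinarith [mul_nonneg hc (sub_nonneg.2 hxT)]
  rw [← intervalIntegral.integral_const_mul]
  refine (intervalIntegral.integral_mono_on hT (Continuous.intervalIntegrable (by fun_prop) _ _)
    (Continuous.intervalIntegrable (by fun_prop) _ _) hle).trans_eq ?_
  rw [intervalIntegral.integral_eq_sub_of_hasDerivAt (fun x _ => hderiv x)
    (Continuous.intervalIntegrable (by fun_prop) _ _)]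
  simp only [mul_zero, zero_pow two_ne_zero, sub_zero, exp_zero]
  ring

theorem mul_integral_Ioi_exp_neg_mul_sub_mul_sq_le (hA : 0 ≤ A) (hc : 0 < c) (hT : 0 ≤ T) :
    (A + 2 * c * T) * ∫ x in Ioi T, exp (-A * x - c * x ^ 2) ≤ exp (-A * T - c * T ^ 2) := by
  have hderiv : ∀ x ∈ Ici T, HasDerivAt (fun x => -exp (-A * x - c * x ^ 2))
      ((A + 2 * c * x) * exp (-A * x - c * x ^ 2)) x :=
    fun x _ => hasDerivAt_neg_exp_neg_mul_sub_mul_sq A c x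
  have hpos : ∀ x ∈ Ioi T, 0 ≤ (A + 2 * c * x) * exp (-A * x - c * x ^ 2) := fun x hx => by
    have hx0 : 0 ≤ x := hT.trans hx.le
    positivity
  have hlim := (tendsto_exp_neg_mul_sub_mul_sq_atTop (A := A) hc).neg
  rw [neg_zero] at hlim
  rw [← integral_const_mul]
  refine (setIntegral_mono_on
    (((integrableOn_Ioi_exp_neg_mul_sub_mul_sq hA hc).mono_set (Ioi_subset_Ioi hT)).const_mul _)
    (integrableOn_Ioi_deriv_of_nonneg' hderiv hpos hlim) measurableSet_Ioi fun x hx => ?_).trans_eq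
    ((integral_Ioi_of_hasDerivAt_of_nonneg' hderiv hpos hlim).trans (by ring))
  have hx : T ≤ x := hx.le
  gcongr

theorem mul_integral_exp_neg_mul_sub_mul_sq_le (hA : 0 ≤ A) (hc : 0 < c) (hT : 0 ≤ T) :
    (A + 2 * c * T) * ∫ x in Ioi 0, exp (-A * x - c * x ^ 2) ≤ 1 + c * T ^ 2 := by
  have hint := integrableOn_Ioi_exp_neg_mul_sub_mul_sq hA hc
  rw [← intervalIntegral.integral_interval_add_Ioi hint (hint.mono_set (Ioi_subset_Ioi hT)),
    mul_add]
  linarith [mul_intervalIntegral_exp_neg_mul_sub_mul_sq_le hA hc.le hT,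
    mul_integral_Ioi_exp_neg_mul_sub_mul_sq_le hA hc hT]

end

/-- Explicit estimate for a Gaussian-type exponential integral. -/
theorem exp_integral_bound (A B a : ℝ) (hA : 0 ≤ A) (hB : 0 < B) (ha : 0 < a) :
    ∫ x in Set.Ioi (0:ℝ), Real.exp (-A * x - a * B / 4 * x^2) ≤
      (2/a + Real.exp (-1/a)) * Real.sqrt 2 / (A + Real.sqrt B) := by
  have hS : 0 < √B := sqrt_pos.2 hB
  have hkey := mul_integral_exp_neg_mul_sub_mul_sq_le hA (by positivity : 0 < a * B / 4)
    (by positivity : 0 ≤ 2 / (a * √B))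
  have hslope : 2 * (a * B / 4) * (2 / (a * √B)) = √B := by
    field_simp; rw [sq_sqrt hB.le]; ring
  have hconst : a * B / 4 * (2 / (a * √B)) ^ 2 = 1 / a := by
    field_simp; rw [sq_sqrt hB.le]; ring
  rw [hslope, hconst] at hkey
  have hexp : 1 + 1 / a ≤ 2 / a + exp (-1 / a) := by
    have : 2 / a = 1 / a + 1 / a := by ring
    linarith [add_one_le_exp (-1 / a), neg_div a 1]
  rw [le_div_iff₀ (by positivity), mul_comm]
  calc (A + √B) * ∫ x in Ioi 0, exp (-A * x - a * B / 4 * x ^ 2)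
      ≤ 1 + 1 / a := hkey
    _ ≤ 2 / a + exp (-1 / a) := hexp
    _ ≤ (2 / a + exp (-1 / a)) * √2 :=
      le_mul_of_one_le_right (by positivity) (one_le_sqrt.2 one_le_two)
end

section
/- Let α, β, γ, T be positive real numbers, let x > 0, and let z ∈ ℂ with |z − x| ≤ x/2. Define φ(z) := z^{−α}·(1+z)^{−β}·(Log((1+z)/z))^{−γ} and f(z) := (T/(2π))·Log((1+z)/z), using the principal branch of the complex logarithm and principal complex powers. Then |φ(z)| ≤ 2^{α+β−γ}·3^{γ}·x^{−α}·(1+x)^{γ−β}, |f'(z)| ≤ 2T/(π·x·(1+x)), and |f''(z)| ≥ 4T/(27π·x²·(1+x)). -/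
/-!
On the disk, `x/2 ≤ Re z ≤ ‖z‖ ≤ 3x/2` and `‖1 + z‖ ≥ (1 + x)/2`. The bound on `φ` multiplies
bounds for its three factors; for the logarithm, `‖Log (1 + u)‖ ≥ ‖u‖/(1 + ‖u‖)` at `u = 1/z`,
which follows from `‖exp w - 1‖ ≤ ‖w‖ exp ‖w‖`. The derivatives are explicit,
`f' = -c/(z(1 + z))` and `f'' = c(1 + 2z)/(z(1 + z))²` with `c = T/(2π)`; for the lower bound on
`f''` one uses `‖1 + 2z‖ ≥ 1 + 2 Re z` and `‖z‖² ≤ x(2 Re z - 3x/4)`, the disk condition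
`‖z - x‖² ≤ x²/4` expanded.
-/

open Real

namespace Complex

lemma norm_div_one_add_norm_le_norm_log_one_add {u : ℂ} (hu : 1 + u ≠ 0) :
    ‖u‖ / (1 + ‖u‖) ≤ ‖log (1 + u)‖ := by
  set t := ‖log (1 + u)‖
  have hut : ‖u‖ ≤ t * Real.exp t := by
    simpa [exp_log hu] using norm_exp_sub_sum_le_norm_mul_exp (log (1 + u)) 1
  have ht : 0 ≤ t := norm_nonneg _
  rw [div_le_iff₀ (by positivity)]
  rcases le_or_gt 1 t with ht1 | ht1
  · nlinarith [norm_nonneg u]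
  · have hexp : Real.exp t * (1 - t) ≤ 1 := by
      calc Real.exp t * (1 - t) ≤ Real.exp t * Real.exp (-t) := by
            gcongr; exact one_sub_le_exp_neg t
        _ = 1 := by rw [← Real.exp_add, add_neg_cancel, Real.exp_zero]
    nlinarith [mul_le_mul_of_nonneg_right hut (sub_nonneg.2 ht1.le)]

lemma norm_cpow_neg_ofReal_le {w : ℂ} {a s : ℝ} (ha : 0 < a) (hw : a ≤ ‖w‖) (hs : 0 ≤ s) :
    ‖w ^ (-(s : ℂ))‖ ≤ a ^ (-s) := by
  rw [← ofReal_neg, norm_cpow_real]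
  exact rpow_le_rpow_of_nonpos ha hw (neg_nonpos.2 hs)

lemma hasDerivAt_log_one_add_div_self {w : ℂ} (hw : 0 < w.re) :
    HasDerivAt (fun u => log ((1 + u) / u)) (-1 / (w * (1 + w))) w := by
  have hw0 : w ≠ 0 := by rintro rfl; simp at hw
  have hslit : (1 + w) / w ∈ slitPlane := by
    rw [add_div, div_self hw0, one_div]
    refine Or.inl ?_
    simp only [add_re, one_re, inv_re]
    have := normSq_pos.2 hw0
    positivity
  have hquot : HasDerivAt (fun u => (1 + u) / u) ((1 * w - (1 + w) * 1) / w ^ 2) w :=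
    ((hasDerivAt_id w).const_add 1).div (hasDerivAt_id w) hw0
  refine (hquot.clog hslit).congr_deriv ?_
  field_simp
  ring

lemma iteratedDeriv_two_const_mul_log_one_add_div_self (c : ℂ) {w : ℂ} (hw : 0 < w.re) :
    iteratedDeriv 2 (fun u => c * log ((1 + u) / u)) w = c * ((1 + 2 * w) / (w * (1 + w)) ^ 2) := by
  have hw0 : w ≠ 0 := by rintro rfl; simp at hw
  have hw1 : 1 + w ≠ 0 := by
    intro h; have := congrArg re h; simp at this; linarith
  have hderiv : deriv (fun u => c * log ((1 + u) / u)) =ᶠ[nhds w]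
      fun u => c * (-1 / (u * (1 + u))) := by
    filter_upwards [(isOpen_lt continuous_const continuous_re).mem_nhds hw] with u hu
    exact ((hasDerivAt_log_one_add_div_self hu).const_mul c).deriv
  rw [iteratedDeriv_succ, iteratedDeriv_one, hderiv.deriv_eq]
  have hrec : HasDerivAt (fun u => c * (-1 / (u * (1 + u))))
      (c * ((0 * (w * (1 + w)) - -1 * (1 * (1 + w) + w * 1)) / (w * (1 + w)) ^ 2)) w :=
    ((hasDerivAt_const w (-1 : ℂ)).div ((hasDerivAt_id w).mul
      ((hasDerivAt_id w).const_add 1)) (mul_ne_zero hw0 hw1)).const_mul c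
  rw [hrec.deriv]
  ring

end Complex

open Complex

section Disk

variable {x : ℝ} {z : ℂ}

lemma half_le_re_of_norm_sub_le (hz : ‖z - x‖ ≤ x / 2) : x / 2 ≤ z.re := by
  have := (abs_le.1 ((abs_re_le_norm (z - x)).trans hz)).1
  simp only [sub_re, ofReal_re] at this
  linarith

lemma half_le_norm_of_norm_sub_le (hz : ‖z - x‖ ≤ x / 2) : x / 2 ≤ ‖z‖ :=
  (half_le_re_of_norm_sub_le hz).trans (re_le_norm z)

lemma norm_le_three_halves_of_norm_sub_le (hz : ‖z - x‖ ≤ x / 2) : ‖z‖ ≤ 3 * x / 2 := by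
  have hx : 0 ≤ x := by linarith [norm_nonneg (z - x)]
  calc ‖z‖ ≤ ‖z - x‖ + ‖(x : ℂ)‖ := norm_le_norm_add_norm_sub' z x |>.trans_eq (add_comm _ _)
    _ ≤ x / 2 + x := by rw [norm_real, norm_of_nonneg hx]; linarith
    _ = 3 * x / 2 := by ring

lemma half_one_add_le_norm_one_add_of_norm_sub_le (hz : ‖z - x‖ ≤ x / 2) :
    (1 + x) / 2 ≤ ‖1 + z‖ := by
  have := re_le_norm (1 + z)
  simp only [add_re, one_re] at this
  linarith [half_le_re_of_norm_sub_le hz]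

lemma two_div_le_norm_log_one_add_div_self (hx : 0 < x) (hz : ‖z - x‖ ≤ x / 2) :
    2 / (3 * (1 + x)) ≤ ‖Complex.log ((1 + z) / z)‖ := by
  have hz0 : 0 < ‖z‖ := by linarith [half_le_norm_of_norm_sub_le hz]
  have hz1 : 1 + z ≠ 0 := norm_pos_iff.1 <| by
    linarith [half_one_add_le_norm_one_add_of_norm_sub_le hz]
  have hquot : (1 + z) / z = 1 + z⁻¹ := by
    rw [add_div, div_self (norm_pos_iff.1 hz0), one_div, add_comm]
  calc 2 / (3 * (1 + x)) ≤ 1 / (1 + ‖z‖) := by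
        rw [div_le_div_iff₀ (by positivity) (by positivity)]
        linarith [norm_le_three_halves_of_norm_sub_le hz]
    _ = ‖z⁻¹‖ / (1 + ‖z⁻¹‖) := by rw [norm_inv]; field_simp; ring
    _ ≤ ‖Complex.log ((1 + z) / z)‖ := by
        rw [hquot]
        exact norm_div_one_add_norm_le_norm_log_one_add
          (hquot ▸ div_ne_zero hz1 (norm_pos_iff.1 hz0))

lemma eight_mul_sq_le_of_norm_sub_le (hx : 0 < x) (hz : ‖z - x‖ ≤ x / 2) :
    8 * (‖z‖ * ‖1 + z‖) ^ 2 ≤ 27 * x ^ 2 * (1 + x) * ‖1 + 2 * z‖ := by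
  have hsub : ‖z - x‖ ^ 2 = ‖z‖ ^ 2 - 2 * x * z.re + x ^ 2 := by
    simp only [Complex.sq_norm, normSq_sub, normSq_ofReal, conj_ofReal, re_mul_ofReal]; ring
  have hadd : ‖1 + z‖ ^ 2 = 1 + 2 * z.re + ‖z‖ ^ 2 := by
    simp only [Complex.sq_norm, normSq_add, map_one, one_mul, conj_re]; ring
  have hdisk : ‖z‖ ^ 2 ≤ x * (2 * z.re - 3 * x / 4) := by
    nlinarith [pow_le_pow_left₀ (norm_nonneg _) hz 2]
  have hre := half_le_re_of_norm_sub_le hz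
  have hre' : z.re ≤ 3 * x / 2 := by nlinarith [re_sq_le_normSq z, Complex.sq_norm z]
  have hu : 0 ≤ 2 * z.re - 3 * x / 4 := by linarith
  calc 8 * (‖z‖ * ‖1 + z‖) ^ 2 = 8 * ‖z‖ ^ 2 * (1 + 2 * z.re + ‖z‖ ^ 2) := by
        rw [mul_pow, hadd]; ring
    _ ≤ 8 * (x * (2 * z.re - 3 * x / 4)) * (1 + 2 * z.re + x * (2 * z.re - 3 * x / 4)) := by
        gcongr
        nlinarith [norm_nonneg z]
    _ ≤ 27 * x ^ 2 * (1 + x) * (1 + 2 * z.re) := by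
        -- `u = 2 Re z - 3x/4` satisfies `0 ≤ u ≤ 9x/4` and `u ≤ 2 Re z`
        have hu9 : 2 * z.re - 3 * x / 4 ≤ 9 * x / 4 := by linarith
        have hre0 : 0 ≤ z.re := by linarith
        have hx3 : 0 ≤ x ^ 3 := by positivity
        nlinarith [mul_nonneg (mul_nonneg hx.le (by linarith : (0:ℝ) ≤ 1 + 2 * z.re))
            (sub_nonneg.2 hu9), mul_nonneg (mul_nonneg (sq_nonneg x) hu) (sub_nonneg.2 hu9),
          pow_nonneg hx.le 4, mul_nonneg hx3 hre0]
    _ ≤ 27 * x ^ 2 * (1 + x) * ‖1 + 2 * z‖ := by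
        gcongr
        simpa using re_le_norm (1 + 2 * z)

lemma norm_cpow_mul_cpow_mul_log_cpow_le {α β γ : ℝ} (hα : 0 ≤ α) (hβ : 0 ≤ β) (hγ : 0 ≤ γ)
    (hx : 0 < x) (hz : ‖z - x‖ ≤ x / 2) :
    ‖z ^ (-(α : ℂ)) * (1 + z) ^ (-(β : ℂ)) * Complex.log ((1 + z) / z) ^ (-(γ : ℂ))‖ ≤
      2 ^ (α + β - γ) * 3 ^ γ * x ^ (-α) * (1 + x) ^ (γ - β) := by
  calc _ ≤ (x / 2) ^ (-α) * ((1 + x) / 2) ^ (-β) * (2 / (3 * (1 + x))) ^ (-γ) := by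
        rw [norm_mul, norm_mul]
        gcongr
        · exact norm_cpow_neg_ofReal_le (by positivity) (half_le_norm_of_norm_sub_le hz) hα
        · exact norm_cpow_neg_ofReal_le (by positivity)
            (half_one_add_le_norm_one_add_of_norm_sub_le hz) hβ
        · exact norm_cpow_neg_ofReal_le (by positivity)
            (two_div_le_norm_log_one_add_div_self hx hz) hγ
    _ = 2 ^ (α + β - γ) * 3 ^ γ * x ^ (-α) * (1 + x) ^ (γ - β) := by
        have h1x : 0 < 1 + x := by linarith
        have hx2 : 0 < x / 2 := by positivity
        have h1x2 : 0 < (1 + x) / 2 := by positivity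
        have h23 : 0 < 2 / (3 * (1 + x)) := by positivity
        simp only [rpow_def_of_pos, hx, h1x, hx2, h1x2, h23, two_pos, three_pos, ← Real.exp_add]
        rw [Real.log_div hx.ne' two_ne_zero, Real.log_div h1x.ne' two_ne_zero,
          Real.log_div two_ne_zero (by positivity), Real.log_mul three_ne_zero h1x.ne']
        ring_nf

lemma norm_deriv_const_mul_log_one_add_div_self_le (c : ℂ) (hx : 0 < x) (hz : ‖z - x‖ ≤ x / 2) :
    ‖deriv (fun w => c * Complex.log ((1 + w) / w)) z‖ ≤ 4 * ‖c‖ / (x * (1 + x)) := by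
  have hre : 0 < z.re := by linarith [half_le_re_of_norm_sub_le hz]
  rw [((hasDerivAt_log_one_add_div_self hre).const_mul c).deriv, norm_mul, norm_div, norm_neg,
    norm_one, norm_mul]
  calc ‖c‖ * (1 / (‖z‖ * ‖1 + z‖)) ≤ ‖c‖ * (1 / (x / 2 * ((1 + x) / 2))) := by
        gcongr
        · exact half_le_norm_of_norm_sub_le hz
        · exact half_one_add_le_norm_one_add_of_norm_sub_le hz
    _ = 4 * ‖c‖ / (x * (1 + x)) := by field_simp; ring

lemma le_norm_iteratedDeriv_two_const_mul_log_one_add_div_self (c : ℂ) (hx : 0 < x)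
    (hz : ‖z - x‖ ≤ x / 2) :
    8 * ‖c‖ / (27 * x ^ 2 * (1 + x)) ≤
      ‖iteratedDeriv 2 (fun w => c * Complex.log ((1 + w) / w)) z‖ := by
  have hre : 0 < z.re := by linarith [half_le_re_of_norm_sub_le hz]
  have hz0 : 0 < ‖z‖ * ‖1 + z‖ := by
    apply mul_pos <;>
      linarith [half_le_norm_of_norm_sub_le hz, half_one_add_le_norm_one_add_of_norm_sub_le hz]
  calc 8 * ‖c‖ / (27 * x ^ 2 * (1 + x)) = ‖c‖ * (8 / (27 * x ^ 2 * (1 + x))) := by ring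
    _ ≤ ‖c‖ * (‖1 + 2 * z‖ / (‖z‖ * ‖1 + z‖) ^ 2) := by
        refine mul_le_mul_of_nonneg_left ?_ (norm_nonneg c)
        rw [div_le_div_iff₀ (by positivity) (by positivity)]
        linarith [eight_mul_sq_le_of_norm_sub_le hx hz]
    _ = _ := by
        rw [iteratedDeriv_two_const_mul_log_one_add_div_self c hre, norm_mul, norm_div, norm_pow,
          norm_mul]

end Disk

/-- Bounds for the auxiliary functions `φ` and `f` of the first exponential integral,
on the disk `|z - x| ≤ x/2`. -/
theorem first_integral_aux_bounds (α β γ T x : ℝ)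
    (hα : 0 < α) (hβ : 0 < β) (hγ : 0 < γ) (hT : 0 < T) (hx : 0 < x)
    (z : ℂ) (hz : ‖z - (x : ℂ)‖ ≤ x / 2)
    (φ f : ℂ → ℂ)
    (hφdef : φ = fun w => w ^ (-(α:ℂ)) * (1 + w) ^ (-(β:ℂ)) *
      Complex.log ((1 + w) / w) ^ (-(γ:ℂ)))
    (hfdef : f = fun w => (T / (2*π) : ℝ) * Complex.log ((1 + w) / w)) :
    ‖φ z‖ ≤ (2:ℝ) ^ (α + β - γ) * (3:ℝ) ^ γ * x ^ (-α) * (1 + x) ^ (γ - β) ∧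
    ‖deriv f z‖ ≤ 2 * T / (π * x * (1 + x)) ∧
    4 * T / (27 * π * x^2 * (1 + x)) ≤ ‖iteratedDeriv 2 f z‖ := by
  subst hφdef hfdef
  have hc : ‖((T / (2 * π) : ℝ) : ℂ)‖ = T / (2 * π) := by
    rw [norm_real, norm_of_nonneg (by positivity)]
  refine ⟨norm_cpow_mul_cpow_mul_log_cpow_le hα.le hβ.le hγ.le hx hz, ?_, ?_⟩
  · refine (norm_deriv_const_mul_log_one_add_div_self_le _ hx hz).trans_eq ?_
    rw [hc]; field_simp; ring
  · refine (Eq.le ?_).trans (le_norm_iteratedDeriv_two_const_mul_log_one_add_div_self _ hx hz)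
    rw [hc]; field_simp; ring
end

section
/- For every real Z > 4 one has Σ_{Z/2 < n ≤ Z−√Z} d(n)/(Z − n) ≤ (1/2)·(log Z)² − (log 2 − γ)·log Z + 2.365, where the sum ranges over positive integers n with Z/2 < n ≤ Z − √Z. -/
open Real

/-- Number of positive divisors of `n`. -/
def d (n : ℕ) : ℕ := n.divisors.card

open Finset

/-! For `n ≤ Z < (⌊√Z⌋ + 1)²` the divisors of `n` pair off as `a ↔ n / a` with one member of each
pair at most `N = ⌊√Z⌋`, so `d(n) ≤ 2 #{a ≤ N | a ∣ n}`. Swapping the sums, the multiples `n = ak`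
of a fixed `a ≤ N` in `(Z/2, Z - √Z]` contribute at most `1/√Z + log(√Z/2)/a`: all but the last
term are bounded through `a/x ≤ log x - log (x - a)`, and the sum telescopes. Summing over `a`
gives `2N/√Z + 2 log(√Z/2) H_N`; with `H_N ≤ log (N + 1) + γ` and `log(√Z/2) ≤ √Z/2 - 1` the
lower-order terms fit into `2.365`. -/

theorem card_divisors_le_two_mul_card_filter_le {n N : ℕ} (hn : n < (N + 1) ^ 2) :
    #n.divisors ≤ 2 * #{a ∈ n.divisors | a ≤ N} := by
  have hlarge : #{a ∈ n.divisors | ¬a ≤ N} ≤ #{a ∈ n.divisors | a ≤ N} := by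
    refine card_le_card_of_injOn (n / ·) (fun a ha => ?_) (fun a ha b hb hab => ?_)
    · simp only [coe_filter, Set.mem_ofPred_eq, Nat.mem_divisors, not_le] at ha ⊢
      obtain ⟨⟨hdvd, hn0⟩, hNa⟩ := ha
      refine ⟨⟨Nat.div_dvd_of_dvd hdvd, hn0⟩, ?_⟩
      by_contra! h
      have : (N + 1) * (N + 1) ≤ a * (n / a) := Nat.mul_le_mul hNa h
      rw [Nat.mul_div_cancel' hdvd] at this
      nlinarith
    · simp only [coe_filter, Set.mem_ofPred_eq, Nat.mem_divisors] at ha hb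
      simpa [Nat.div_div_self ha.1.1 ha.1.2, Nat.div_div_self hb.1.1 hb.1.2] using
        congrArg (n / ·) hab
  have := card_filter_add_card_filter_not (s := n.divisors) (· ≤ N)
  omega

theorem sum_d_mul_le {N : ℕ} {S : Finset ℕ} {f : ℕ → ℝ} (hf : ∀ n ∈ S, 0 ≤ f n)
    (hS : ∀ n ∈ S, 0 < n ∧ n < (N + 1) ^ 2) :
    ∑ n ∈ S, d n * f n ≤ 2 * ∑ a ∈ Icc 1 N, ∑ n ∈ S with a ∣ n, f n := by
  calc ∑ n ∈ S, d n * f n ≤ ∑ n ∈ S, 2 * #{a ∈ n.divisors | a ≤ N} * f n := by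
        gcongr with n hn
        · exact hf n hn
        · exact_mod_cast card_divisors_le_two_mul_card_filter_le (hS n hn).2
    _ = 2 * ∑ n ∈ S, ∑ a ∈ n.divisors with a ≤ N, f n := by
        simp only [mul_sum, sum_const, nsmul_eq_mul, mul_assoc]
    _ = 2 * ∑ a ∈ Icc 1 N, ∑ n ∈ S with a ∣ n, f n := by
        congr 1
        refine sum_comm' fun n a => ?_
        have := hS n
        simp only [mem_filter, Nat.mem_divisors, mem_Icc]
        constructor
        · rintro ⟨hn, ⟨had, -⟩, haN⟩
          exact ⟨⟨hn, had⟩, Nat.pos_of_dvd_of_pos had (this hn).1, haN⟩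
        · rintro ⟨⟨hn, had⟩, -, haN⟩
          exact ⟨hn, ⟨had, (this hn).1.ne'⟩, haN⟩

theorem sub_div_le_log_sub_log {u v : ℝ} (hu : 0 < u) (hv : 0 < v) :
    (u - v) / u ≤ log u - log v := by
  have := one_sub_inv_le_log_of_pos (div_pos hu hv)
  rw [sub_div, div_self hu.ne']
  rwa [inv_div, log_div hu.ne' hv.ne'] at this

theorem sum_Ico_sub_div_le_log_sub_log {x : ℕ → ℝ} {m n : ℕ} (hmn : m ≤ n)
    (hx : ∀ k ∈ Icc m n, 0 < x k) :
    ∑ k ∈ Ico m n, (x k - x (k + 1)) / x k ≤ log (x m) - log (x n) := by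
  induction n, hmn using Nat.le_induction with
  | base => simp
  | succ n hmn ih =>
    rw [sum_Ico_succ_top hmn]
    have hxn := hx n (by simp [hmn])
    have hxn1 := hx (n + 1) (by simp; omega)
    have := ih fun k hk => hx k (Icc_subset_Icc_right n.le_succ hk)
    linarith [sub_div_le_log_sub_log hxn hxn1]

theorem sum_Icc_one_div_sub_mul_le {a c Z : ℝ} (ha : 0 < a) (hc : 0 < c) {m M : ℕ} (hmM : m ≤ M)
    (hM : c ≤ Z - a * M) :
    ∑ k ∈ Icc m M, 1 / (Z - a * k) ≤ 1 / c + (log (Z - a * m) - log c) / a := by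
  have hge : ∀ k ∈ Icc m M, c ≤ Z - a * k := fun k hk => by
    have : (k : ℝ) ≤ M := by exact_mod_cast (mem_Icc.1 hk).2
    nlinarith
  have htel := sum_Ico_sub_div_le_log_sub_log (x := fun k : ℕ => Z - a * k) hmM
    fun k hk => hc.trans_le (hge k hk)
  rw [← Ico_add_one_right_eq_Icc, sum_Ico_succ_top hmM]
  have hsum : ∑ k ∈ Ico m M, 1 / (Z - a * k) ≤ (log (Z - a * m) - log (Z - a * M)) / a := by
    rw [le_div_iff₀ ha, sum_mul]
    refine le_trans (le_of_eq (sum_congr rfl fun k _ => ?_)) htel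
    push_cast
    ring
  have hlog : log c ≤ log (Z - a * M) := log_le_log hc hM
  have hlast : 1 / (Z - a * M) ≤ 1 / c := one_div_le_one_div_of_le hc hM
  have : (log (Z - a * m) - log (Z - a * M)) / a ≤ (log (Z - a * m) - log c) / a := by gcongr
  linarith

theorem sum_one_div_sub_le_of_dvd {a : ℕ} (ha : 0 < a) {B c Z : ℝ} (hc : 0 < c) (hcB : c ≤ B)
    {T : Finset ℕ} (hT : ∀ n ∈ T, a ∣ n ∧ Z - B < n ∧ (n : ℝ) ≤ Z - c) :
    ∑ n ∈ T, 1 / (Z - n) ≤ 1 / c + (log B - log c) / a := by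
  set K := T.image (· / a)
  have hTK : T = K.image (a * ·) := by
    rw [image_image]
    exact ((image_congr fun n hn => Nat.mul_div_cancel' (hT n hn).1).trans image_id').symm
  have hK : ∀ k ∈ K, Z - B < a * k ∧ a * k ≤ Z - c := fun k hk => by
    have := hT (a * k) (hTK ▸ mem_image_of_mem _ hk)
    push_cast at this
    exact this.2
  have haR : (0 : ℝ) < a := by exact_mod_cast ha
  rw [hTK, sum_image fun k _ l _ h => Nat.eq_of_mul_eq_mul_left ha h]
  rcases K.eq_empty_or_nonempty with hKe | hKne
  · rw [hKe, sum_empty]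
    have : 0 ≤ log B - log c := sub_nonneg.2 (log_le_log hc hcB)
    positivity
  · obtain ⟨hmB, -⟩ := hK _ (K.min'_mem hKne)
    obtain ⟨-, hMc⟩ := hK _ (K.max'_mem hKne)
    have hsub : K ⊆ Icc (K.min' hKne) (K.max' hKne) := fun k hk =>
      mem_Icc.2 ⟨K.min'_le k hk, K.le_max' k hk⟩
    calc ∑ k ∈ K, 1 / (Z - ((a * k : ℕ) : ℝ))
        ≤ ∑ k ∈ Icc (K.min' hKne) (K.max' hKne), 1 / (Z - a * k) := by
          push_cast
          refine sum_le_sum_of_subset_of_nonneg hsub fun k hk _ => ?_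
          have : (k : ℝ) ≤ K.max' hKne := by exact_mod_cast (mem_Icc.1 hk).2
          have : c ≤ Z - a * k := by nlinarith
          exact one_div_nonneg.2 (hc.le.trans this)
      _ ≤ 1 / c + (log (Z - a * K.min' hKne) - log c) / a :=
          sum_Icc_one_div_sub_mul_le haR hc (K.min'_le_max' hKne) (by linarith)
      _ ≤ 1 / c + (log B - log c) / a := by
          have : c ≤ Z - a * K.min' hKne := by
            have : (K.min' hKne : ℝ) ≤ K.max' hKne := by exact_mod_cast K.min'_le_max' hKne
            nlinarith
          gcongr
          · linarith
          · linarith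

theorem harmonic_le_log_add_eulerMascheroniConstant {s : ℝ} (hs : 0 < s) {N : ℕ}
    (hN : (N : ℝ) ≤ s) : (harmonic N : ℝ) ≤ log s + eulerMascheroniConstant + 1 / s := by
  have hγ := eulerMascheroniSeq_lt_eulerMascheroniConstant N
  rw [eulerMascheroniSeq] at hγ
  have hlog : log (N + 1) ≤ log (s + 1) := log_le_log (by positivity) (by linarith)
  have hstep : log (s + 1) - log s ≤ 1 / s := by
    rw [← log_div (by positivity) hs.ne']
    convert log_le_sub_one_of_pos (x := (s + 1) / s) (by positivity) using 1
    field_simp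
    ring
  linarith

theorem two_mul_div_add_mul_harmonic_le {s : ℝ} (hs : 2 ≤ s) {N : ℕ} (hN : (N : ℝ) ≤ s) :
    2 * (N / s + (log s - log 2) * harmonic N)
      ≤ 2 * log s ^ 2 - 2 * (log 2 - eulerMascheroniConstant) * log s + 2.365 := by
  have hs0 : 0 < s := by linarith
  have hH := harmonic_le_log_add_eulerMascheroniConstant hs0 hN
  have hC : log s - log 2 ≤ s / 2 - 1 := by
    rw [← log_div hs0.ne' two_ne_zero]
    exact log_le_sub_one_of_pos (by positivity)
  have hC0 : 0 ≤ log s - log 2 := sub_nonneg.2 (log_le_log two_pos hs)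
  have hNs : N / s ≤ 1 := (div_le_one hs0).2 hN
  have hCs : (log s - log 2) * (1 / s) ≤ 1 / 2 := by
    rw [mul_one_div, div_le_iff₀ hs0]
    linarith
  have hγ := one_half_lt_eulerMascheroniConstant
  have hl2 := log_two_gt_d9
  have := mul_le_mul_of_nonneg_left hH hC0
  nlinarith

/-- Explicit bound for the divisor sum `Σ_{Z/2 < n ≤ Z−√Z} d(n)/(Z−n)`. -/
theorem divisor_sum_below_bound (Z : ℝ) (hZ : 4 < Z) :
    ∑ n ∈ (Finset.Icc 1 ⌊Z - Real.sqrt Z⌋₊).filter (fun n : ℕ => Z/2 < (n:ℝ)),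
        (d n : ℝ) / (Z - n)
      ≤ (1/2) * (Real.log Z)^2 - (Real.log 2 - Real.eulerMascheroniConstant) * Real.log Z
          + 2.365 := by
  set s := √Z
  have hsZ : s * s = Z := mul_self_sqrt (by linarith)
  have hs : 2 < s := by nlinarith [sqrt_nonneg Z]
  set S := (Icc 1 ⌊Z - s⌋₊).filter (fun n : ℕ => Z / 2 < (n : ℝ))
  have hS : ∀ n ∈ S, 0 < n ∧ Z / 2 < n ∧ (n : ℝ) ≤ Z - s := fun n hn => by
    simp only [S, mem_filter, mem_Icc] at hn
    exact ⟨hn.1.1, hn.2, (Nat.le_floor_iff (by nlinarith)).1 hn.1.2⟩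
  set N := ⌊s⌋₊
  have hN : (N : ℝ) ≤ s := Nat.floor_le (by linarith)
  calc ∑ n ∈ S, (d n : ℝ) / (Z - n) = ∑ n ∈ S, d n * (1 / (Z - n)) := by simp only [mul_one_div]
    _ ≤ 2 * ∑ a ∈ Icc 1 N, ∑ n ∈ S with a ∣ n, 1 / (Z - n) := by
        refine sum_d_mul_le (fun n hn => ?_) fun n hn => ⟨(hS n hn).1, ?_⟩
        · exact one_div_nonneg.2 (by linarith [(hS n hn).2.2])
        · have : (n : ℝ) < (N + 1) ^ 2 := by nlinarith [(hS n hn).2.2, Nat.lt_floor_add_one s]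
          exact_mod_cast this
    _ ≤ 2 * ∑ a ∈ Icc 1 N, (1 / s + (log (Z / 2) - log s) / a) := by
        gcongr with a ha
        refine sum_one_div_sub_le_of_dvd (mem_Icc.1 ha).1 (by linarith) (by nlinarith) fun n hn => ?_
        obtain ⟨hnS, hdvd⟩ := mem_filter.1 hn
        exact ⟨hdvd, by linarith [(hS n hnS).2.1], (hS n hnS).2.2⟩
    _ = 2 * (N / s + (log s - log 2) * harmonic N) := by
        rw [sum_add_distrib, sum_const, Nat.card_Icc, Nat.add_sub_cancel, nsmul_eq_mul,
          harmonic_eq_sum_Icc, log_div (by linarith) two_ne_zero, ← hsZ,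
          log_mul (by linarith) (by linarith)]
        push_cast
        simp only [div_eq_mul_inv, ← mul_sum]
        ring
    _ ≤ _ := by
        have hlogZ : log Z = 2 * log s := by rw [← hsZ, log_mul (by linarith) (by linarith)]; ring
        rw [hlogZ]
        linarith [two_mul_div_add_mul_harmonic_le hs.le hN]
end
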